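/- Assume a = 1/4 (with b, d, e ∈ ℝ arbitrary). Let u be a C³ solution of the Longstaff–Schwartz equation on Ω. Then the function w(x,y,t) = e^{bt/2} · √x · ( ∂u/∂x(x,y,t) − 2b·u(x,y,t) ) is also a solution of the Longstaff–Schwartz equation on Ω. -/

import Mathlib

/-- Partial derivative in `x`. -/
noncomputable def pdX (u : ℝ → ℝ → ℝ → ℝ) (x y t : ℝ) : ℝ := deriv (fun z => u z y t) x

/-- Partial derivative in `y`. -/
noncomputable def pdY (u : ℝ → ℝ → ℝ → ℝ) (x y t : ℝ) : ℝ := deriv (fun z => u x z t) y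

/-- Partial derivative in `t`. -/
noncomputable def pdT (u : ℝ → ℝ → ℝ → ℝ) (x y t : ℝ) : ℝ := deriv (fun z => u x y z) t

/-- Second partial derivative in `x`. -/
noncomputable def pdXX (u : ℝ → ℝ → ℝ → ℝ) (x y t : ℝ) : ℝ := deriv (fun z => pdX u z y t) x

/-- Second partial derivative in `y`. -/
noncomputable def pdYY (u : ℝ → ℝ → ℝ → ℝ) (x y t : ℝ) : ℝ := deriv (fun z => pdY u x z t) y

/-- The domain `Ω = {(x,y,t) : x > 0, y > 0}`. -/
def Omega : Set (ℝ × ℝ × ℝ) := {p | 0 < p.1 ∧ 0 < p.2.1}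

/-- The Longstaff–Schwartz (Kolmogorov backward) equation
`u_t = −((a−bx)·u_x + (d−ey)·u_y + (x/2)·u_xx + (y/2)·u_yy)` holds at the point `(x,y,t)`. -/
def LSEq (a b d e : ℝ) (u : ℝ → ℝ → ℝ → ℝ) (x y t : ℝ) : Prop :=
  pdT u x y t =
    -((a - b * x) * pdX u x y t + (d - e * y) * pdY u x y t +
      x / 2 * pdXX u x y t + y / 2 * pdYY u x y t)

/-- `u` is a solution of the Longstaff–Schwartz equation on `Ω`: it is C² on `Ω` and
satisfies the equation at every point of `Ω`. -/
def IsLSSolution (a b d e : ℝ) (u : ℝ → ℝ → ℝ → ℝ) : Prop :=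
  ContDiffOn ℝ 2 (fun p : ℝ × ℝ × ℝ => u p.1 p.2.1 p.2.2) Omega ∧
  ∀ x y t : ℝ, 0 < x → 0 < y → LSEq a b d e u x y t

/-!
Write `𝒜 = lsOp a b d e = ∂ₜ + (a - b x) ∂ₓ + (d - e y) ∂ᵧ + (x / 2) ∂ₓ² + (y / 2) ∂ᵧ²`, so that the equation
reads `𝒜 u = 0`. Having no zeroth-order term, `𝒜` satisfies the product rule
`𝒜 (φ v) = φ 𝒜 v + v 𝒜 φ + x φₓ vₓ + y φᵧ vᵧ`. For `φ = expSqrt b = e^{bt/2} √x` one computes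
`𝒜 φ = (a - 1/4) φ / (2x)` and `x φₓ = φ / 2`, `φᵧ = 0`. Differentiating `𝒜 u = 0` in `x`
(this is where `C³` is needed, to commute `∂ₓ` with `∂ₜ`, `∂ᵧ` and `∂ᵧ²`) gives
`𝒜 uₓ = b uₓ - uₓₓ / 2`, so `v = uₓ - 2 b u` satisfies `𝒜 v = -vₓ / 2`. Hence for `a = 1/4`,
`𝒜 (φ v) = φ (𝒜 v + vₓ / 2) = 0`.
-/

open Filter Set

def uncurry3 (u : ℝ → ℝ → ℝ → ℝ) : ℝ × ℝ × ℝ → ℝ := fun p => u p.1 p.2.1 p.2.2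

theorem isOpen_omega : IsOpen Omega :=
  (isOpen_lt continuous_const continuous_fst).inter
    (isOpen_lt continuous_const (continuous_fst.comp continuous_snd))

theorem fderiv_fderiv_apply_comm {E F : Type*} [NormedAddCommGroup E] [NormedSpace ℝ E]
    [NormedAddCommGroup F] [NormedSpace ℝ F] {f : E → F} {p : E} (hf : ContDiffAt ℝ 2 f p)
    (v w : E) :
    fderiv ℝ (fun q => fderiv ℝ f q v) p w = fderiv ℝ (fun q => fderiv ℝ f q w) p v := by
  have hf' : DifferentiableAt ℝ (fderiv ℝ f) p :=
    (hf.fderiv_right (m := 1) le_rfl).differentiableAt one_ne_zero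
  rw [fderiv_clm_apply hf' (differentiableAt_const v),
    fderiv_clm_apply hf' (differentiableAt_const w)]
  simpa using hf.isSymmSndFDerivAt (by simp) w v

section Slices

variable {u : ℝ → ℝ → ℝ → ℝ} {n : WithTop ℕ∞} {x y t : ℝ}

theorem contDiffAt_sliceX (hu : ContDiffOn ℝ n (uncurry3 u) Omega) (hx : 0 < x) (hy : 0 < y) :
    ContDiffAt ℝ n (fun z => u z y t) x :=
  (hu.contDiffAt (isOpen_omega.mem_nhds ⟨hx, hy⟩)).comp (f := fun z => (z, y, t)) x
    (by fun_prop)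

theorem contDiffAt_sliceY (hu : ContDiffOn ℝ n (uncurry3 u) Omega) (hx : 0 < x) (hy : 0 < y) :
    ContDiffAt ℝ n (fun z => u x z t) y :=
  (hu.contDiffAt (isOpen_omega.mem_nhds ⟨hx, hy⟩)).comp (f := fun z => (x, z, t)) y
    (by fun_prop)

theorem contDiffAt_sliceT (hu : ContDiffOn ℝ n (uncurry3 u) Omega) (hx : 0 < x) (hy : 0 < y) :
    ContDiffAt ℝ n (fun s => u x y s) t :=
  (hu.contDiffAt (isOpen_omega.mem_nhds ⟨hx, hy⟩)).comp (f := fun s => (x, y, s)) t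
    (by fun_prop)

theorem hasDerivAt_sliceX (hu : ContDiffOn ℝ 1 (uncurry3 u) Omega) (hx : 0 < x) (hy : 0 < y) :
    HasDerivAt (fun z => u z y t) (pdX u x y t) x :=
  ((contDiffAt_sliceX hu hx hy).differentiableAt one_ne_zero).hasDerivAt

theorem pdXX_eq_pdX_pdX (u : ℝ → ℝ → ℝ → ℝ) : pdXX u = pdX (pdX u) := rfl

theorem pdYY_eq_pdY_pdY (u : ℝ → ℝ → ℝ → ℝ) : pdYY u = pdY (pdY u) := rfl

theorem pdXX_eq_iteratedDeriv : pdXX u x y t = iteratedDeriv 2 (fun z => u z y t) x := by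
  simp [iteratedDeriv_succ, pdXX, pdX]

theorem pdYY_eq_iteratedDeriv : pdYY u x y t = iteratedDeriv 2 (fun z => u x z t) y := by
  simp [iteratedDeriv_succ, pdYY, pdY]

end Slices

def IsPartialAlong (P : (ℝ → ℝ → ℝ → ℝ) → ℝ → ℝ → ℝ → ℝ) (v : ℝ × ℝ × ℝ) : Prop :=
  ∀ u, DifferentiableOn ℝ (uncurry3 u) Omega →
    EqOn (uncurry3 (P u)) (fun p => fderiv ℝ (uncurry3 u) p v) Omega

theorem isPartialAlong_pdX : IsPartialAlong pdX (1, 0, 0) := by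
  rintro u hu ⟨x, y, t⟩ hp
  exact ((hu.differentiableAt (isOpen_omega.mem_nhds hp)).hasFDerivAt.comp_hasDerivAt x
    ((hasDerivAt_id x).prodMk ((hasDerivAt_const x y).prodMk (hasDerivAt_const x t)))).deriv

theorem isPartialAlong_pdY : IsPartialAlong pdY (0, 1, 0) := by
  rintro u hu ⟨x, y, t⟩ hp
  exact ((hu.differentiableAt (isOpen_omega.mem_nhds hp)).hasFDerivAt.comp_hasDerivAt y
    ((hasDerivAt_const y x).prodMk ((hasDerivAt_id y).prodMk (hasDerivAt_const y t)))).deriv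

theorem isPartialAlong_pdT : IsPartialAlong pdT (0, 0, 1) := by
  rintro u hu ⟨x, y, t⟩ hp
  exact ((hu.differentiableAt (isOpen_omega.mem_nhds hp)).hasFDerivAt.comp_hasDerivAt t
    ((hasDerivAt_const t x).prodMk ((hasDerivAt_const t y).prodMk (hasDerivAt_id t)))).deriv

namespace IsPartialAlong

variable {P Q : (ℝ → ℝ → ℝ → ℝ) → ℝ → ℝ → ℝ → ℝ} {v w : ℝ × ℝ × ℝ} {u : ℝ → ℝ → ℝ → ℝ}

theorem contDiffOn {n : WithTop ℕ∞} (hP : IsPartialAlong P v)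
    (hu : ContDiffOn ℝ (n + 1) (uncurry3 u) Omega) : ContDiffOn ℝ n (uncurry3 (P u)) Omega :=
  ((ContinuousLinearMap.apply ℝ ℝ v).contDiff.comp_contDiffOn
    (hu.fderiv_of_isOpen isOpen_omega le_rfl)).congr (hP u (hu.differentiableOn (by simp)))

theorem comm (hP : IsPartialAlong P v) (hQ : IsPartialAlong Q w)
    (hu : ContDiffOn ℝ 2 (uncurry3 u) Omega) {x y t : ℝ} (hx : 0 < x) (hy : 0 < y) :
    P (Q u) x y t = Q (P u) x y t := by
  have hp : (x, y, t) ∈ Omega := ⟨hx, hy⟩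
  have hd := hu.differentiableOn two_ne_zero
  have hnhds := isOpen_omega.mem_nhds hp
  calc P (Q u) x y t = fderiv ℝ (uncurry3 (Q u)) (x, y, t) v :=
        hP _ ((hQ.contDiffOn (n := 1) hu).differentiableOn one_ne_zero) hp
    _ = fderiv ℝ (fun q => fderiv ℝ (uncurry3 u) q w) (x, y, t) v := by
        rw [((hQ u hd).eventuallyEq_of_mem hnhds).fderiv_eq]
    _ = fderiv ℝ (fun q => fderiv ℝ (uncurry3 u) q v) (x, y, t) w :=
        fderiv_fderiv_apply_comm (hu.contDiffAt hnhds) w v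
    _ = fderiv ℝ (uncurry3 (P u)) (x, y, t) w := by
        rw [((hP u hd).eventuallyEq_of_mem hnhds).fderiv_eq]
    _ = Q (P u) x y t :=
        (hQ _ ((hP.contDiffOn (n := 1) hu).differentiableOn one_ne_zero) hp).symm

end IsPartialAlong

theorem pdYY_pdX_eq_pdX_pdYY {u : ℝ → ℝ → ℝ → ℝ} {x y t : ℝ}
    (hu : ContDiffOn ℝ 3 (uncurry3 u) Omega) (hx : 0 < x) (hy : 0 < y) :
    pdYY (pdX u) x y t = pdX (pdYY u) x y t := by
  have hcomm : (fun z => pdY (pdX u) x z t) =ᶠ[nhds y] fun z => pdX (pdY u) x z t :=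
    eventuallyEq_of_mem (Ioi_mem_nhds hy) fun z hz =>
      isPartialAlong_pdY.comm isPartialAlong_pdX (hu.of_le (by norm_num)) hx hz
  rw [pdYY, hcomm.deriv_eq]
  exact isPartialAlong_pdY.comm isPartialAlong_pdX (isPartialAlong_pdY.contDiffOn hu) hx hy

noncomputable def lsOp (a b d e : ℝ) (u : ℝ → ℝ → ℝ → ℝ) (x y t : ℝ) : ℝ :=
  pdT u x y t + (a - b * x) * pdX u x y t + (d - e * y) * pdY u x y t +
    x / 2 * pdXX u x y t + y / 2 * pdYY u x y t

section LSOperator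

variable {a b d e x y t : ℝ} {u f g : ℝ → ℝ → ℝ → ℝ}

theorem lsEq_iff_lsOp_eq_zero : LSEq a b d e u x y t ↔ lsOp a b d e u x y t = 0 := by
  rw [LSEq, lsOp]
  constructor <;> intro h <;> linarith

theorem lsOp_const_mul (c : ℝ) :
    lsOp a b d e (fun x y t => c * u x y t) x y t = c * lsOp a b d e u x y t := by
  simp only [lsOp, pdXX_eq_iteratedDeriv, pdYY_eq_iteratedDeriv, iteratedDeriv_const_mul_field]
  simp only [pdT, pdX, pdY, deriv_const_mul_field']
  ring

theorem lsOp_sub (hf : ContDiffOn ℝ 2 (uncurry3 f) Omega) (hg : ContDiffOn ℝ 2 (uncurry3 g) Omega)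
    (hx : 0 < x) (hy : 0 < y) :
    lsOp a b d e (fun x y t => f x y t - g x y t) x y t =
      lsOp a b d e f x y t - lsOp a b d e g x y t := by
  have hfX := contDiffAt_sliceX (t := t) hf hx hy
  have hgX := contDiffAt_sliceX (t := t) hg hx hy
  have hfY := contDiffAt_sliceY (t := t) hf hx hy
  have hgY := contDiffAt_sliceY (t := t) hg hx hy
  simp only [lsOp, pdXX_eq_iteratedDeriv, pdYY_eq_iteratedDeriv, iteratedDeriv_fun_sub hfX hgX,
    iteratedDeriv_fun_sub hfY hgY]
  simp only [pdT, pdX, pdY]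
  rw [deriv_fun_sub (hfX.differentiableAt two_ne_zero) (hgX.differentiableAt two_ne_zero),
    deriv_fun_sub (hfY.differentiableAt two_ne_zero) (hgY.differentiableAt two_ne_zero),
    deriv_fun_sub ((contDiffAt_sliceT hf hx hy).differentiableAt two_ne_zero)
      ((contDiffAt_sliceT hg hx hy).differentiableAt two_ne_zero)]
  ring

theorem lsOp_mul (hf : ContDiffOn ℝ 2 (uncurry3 f) Omega) (hg : ContDiffOn ℝ 2 (uncurry3 g) Omega)
    (hx : 0 < x) (hy : 0 < y) :
    lsOp a b d e (fun x y t => f x y t * g x y t) x y t =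
      f x y t * lsOp a b d e g x y t + g x y t * lsOp a b d e f x y t +
        x * pdX f x y t * pdX g x y t + y * pdY f x y t * pdY g x y t := by
  have hfX := contDiffAt_sliceX (t := t) hf hx hy
  have hgX := contDiffAt_sliceX (t := t) hg hx hy
  have hfY := contDiffAt_sliceY (t := t) hf hx hy
  have hgY := contDiffAt_sliceY (t := t) hg hx hy
  simp only [lsOp, pdXX_eq_iteratedDeriv, pdYY_eq_iteratedDeriv, iteratedDeriv_fun_mul hfX hgX,
    iteratedDeriv_fun_mul hfY hgY]
  simp only [pdT, pdX, pdY]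
  rw [deriv_fun_mul (hfX.differentiableAt two_ne_zero) (hgX.differentiableAt two_ne_zero),
    deriv_fun_mul (hfY.differentiableAt two_ne_zero) (hgY.differentiableAt two_ne_zero),
    deriv_fun_mul ((contDiffAt_sliceT hf hx hy).differentiableAt two_ne_zero)
      ((contDiffAt_sliceT hg hx hy).differentiableAt two_ne_zero)]
  simp only [Finset.sum_range_succ, Finset.range_one, Finset.sum_singleton, Nat.choose_zero_right,
    Nat.choose_succ_self_right, Nat.choose_self, Nat.cast_one, Nat.cast_ofNat, iteratedDeriv_zero,
    iteratedDeriv_one, one_mul, tsub_zero, Nat.add_one_sub_one, tsub_self, Nat.reduceAdd]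
  ring

theorem lsOp_pdX (hu : ContDiffOn ℝ 3 (uncurry3 u) Omega) (hx : 0 < x) (hy : 0 < y) :
    lsOp a b d e (pdX u) x y t =
      pdX (lsOp a b d e u) x y t + b * pdX u x y t - pdXX u x y t / 2 := by
  have hu2 : ContDiffOn ℝ 2 (uncurry3 u) Omega := hu.of_le (by norm_num)
  have hX : ContDiffOn ℝ 2 (uncurry3 (pdX u)) Omega := isPartialAlong_pdX.contDiffOn hu
  have hT := hasDerivAt_sliceX (t := t) (isPartialAlong_pdT.contDiffOn (n := 1) hu2) hx hy
  have hY := hasDerivAt_sliceX (t := t) (isPartialAlong_pdY.contDiffOn (n := 1) hu2) hx hy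
  have hXX := hasDerivAt_sliceX (t := t) (isPartialAlong_pdX.contDiffOn (n := 1) hX) hx hy
  have hYY := hasDerivAt_sliceX (t := t)
    (isPartialAlong_pdY.contDiffOn (n := 1) (isPartialAlong_pdY.contDiffOn (n := 2) hu)) hx hy
  have hL : pdX (lsOp a b d e u) x y t = _ :=
    ((((hT.add ((((hasDerivAt_id' x).const_mul b).const_sub a).mul
      (hasDerivAt_sliceX (hX.of_le one_le_two) hx hy))).add (hY.const_mul (d - e * y))).add
      (((hasDerivAt_id' x).div_const 2).mul hXX)).add (hYY.const_mul (y / 2))).deriv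
  rw [hL, lsOp, pdYY_pdX_eq_pdX_pdYY hu hx hy,
    isPartialAlong_pdT.comm isPartialAlong_pdX hu2 hx hy,
    isPartialAlong_pdY.comm isPartialAlong_pdX hu2 hx hy]
  simp only [pdXX_eq_pdX_pdX, pdYY_eq_pdY_pdY]
  ring

end LSOperator

noncomputable def expSqrt (b : ℝ) : ℝ → ℝ → ℝ → ℝ :=
  fun x _ t => Real.exp (b * t / 2) * Real.sqrt x

section ExpSqrt

variable {a b d e x y t : ℝ}

theorem contDiffOn_expSqrt {n : WithTop ℕ∞} : ContDiffOn ℝ n (uncurry3 (expSqrt b)) Omega :=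
  fun p hp => (ContDiffAt.mul (by fun_prop)
    ((Real.contDiffAt_sqrt hp.1.ne').comp p contDiffAt_fst)).contDiffWithinAt

theorem hasDerivAt_expSqrt_sliceX (hx : 0 < x) :
    HasDerivAt (fun z => expSqrt b z y t) (expSqrt b x y t / (2 * x)) x := by
  refine ((Real.hasDerivAt_sqrt hx.ne').const_mul (Real.exp (b * t / 2))).congr_deriv ?_
  have := Real.sqrt_pos.2 hx
  unfold expSqrt
  field_simp
  rw [Real.sq_sqrt hx.le]

theorem pdX_expSqrt (hx : 0 < x) : pdX (expSqrt b) x y t = expSqrt b x y t / (2 * x) :=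
  (hasDerivAt_expSqrt_sliceX hx).deriv

theorem pdY_expSqrt : pdY (expSqrt b) x y t = 0 := deriv_const _ _

theorem lsOp_expSqrt (hx : 0 < x) :
    lsOp a b d e (expSqrt b) x y t = (a - 1 / 4) / (2 * x) * expSqrt b x y t := by
  have hT : pdT (expSqrt b) x y t = b / 2 * expSqrt b x y t := by
    have h : HasDerivAt (fun s => expSqrt b x y s) _ t :=
      (((hasDerivAt_id' t).const_mul b).div_const 2).exp.mul_const (Real.sqrt x)
    rw [pdT, h.deriv, expSqrt]
    ring
  have hXX : pdXX (expSqrt b) x y t = -expSqrt b x y t / (4 * x ^ 2) := by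
    have h := (hasDerivAt_expSqrt_sliceX (b := b) (y := y) (t := t) hx).fun_div
      ((hasDerivAt_id' x).const_mul 2) (by positivity)
    rw [pdXX, (eventuallyEq_of_mem (Ioi_mem_nhds hx) fun z hz => pdX_expSqrt hz).deriv_eq,
      h.deriv]
    field_simp
    ring
  simp only [lsOp, hT, pdX_expSqrt hx, pdY_expSqrt, hXX, pdYY, deriv_const]
  field_simp
  ring

end ExpSqrt

/-- Infinitesimal symmetry action (`v₃` on solutions) when `a = 1/4`:
if `u` is a C³ solution of the Longstaff–Schwartz equation on `Ω`, then
`w(x,y,t) = e^{bt/2} · √x · (u_x(x,y,t) − 2b·u(x,y,t))` is also a solution on `Ω`. -/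
theorem ls_mu1_is_solution (a b d e : ℝ) (ha : a = 1 / 4)
    (u : ℝ → ℝ → ℝ → ℝ)
    (hu : ContDiffOn ℝ 3 (fun p : ℝ × ℝ × ℝ => u p.1 p.2.1 p.2.2) Omega)
    (heq : ∀ x y t : ℝ, 0 < x → 0 < y → LSEq a b d e u x y t) :
    IsLSSolution a b d e
      (fun x y t =>
        Real.exp (b * t / 2) * Real.sqrt x * (pdX u x y t - 2 * b * u x y t)) := by
  subst ha
  set v : ℝ → ℝ → ℝ → ℝ := fun x y t => pdX u x y t - 2 * b * u x y t
  have hu2 : ContDiffOn ℝ 2 (uncurry3 u) Omega := hu.of_le (by norm_num)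
  have hux : ContDiffOn ℝ 2 (uncurry3 (pdX u)) Omega := isPartialAlong_pdX.contDiffOn hu
  have hbu : ContDiffOn ℝ 2 (uncurry3 fun x y t => 2 * b * u x y t) Omega :=
    contDiffOn_const.mul hu2
  have hv : ContDiffOn ℝ 2 (uncurry3 v) Omega := hux.sub hbu
  refine ⟨contDiffOn_expSqrt.mul hv, fun x y t hx hy => ?_⟩
  have hLu : ∀ x, 0 < x → lsOp (1 / 4) b d e u x y t = 0 := fun x hx =>
    lsEq_iff_lsOp_eq_zero.1 (heq x y t hx hy)
  have hLux : pdX (lsOp (1 / 4) b d e u) x y t = 0 := by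
    rw [pdX, (eventuallyEq_of_mem (Ioi_mem_nhds hx) hLu).deriv_eq, deriv_const]
  have hvx : pdX v x y t = pdXX u x y t - 2 * b * pdX u x y t :=
    ((hasDerivAt_sliceX (hux.of_le one_le_two) hx hy).sub
      ((hasDerivAt_sliceX (hu2.of_le one_le_two) hx hy).const_mul (2 * b))).deriv
  rw [lsEq_iff_lsOp_eq_zero]
  change lsOp _ b d e (fun x y t => expSqrt b x y t * v x y t) x y t = 0
  rw [lsOp_mul contDiffOn_expSqrt hv hx hy, lsOp_expSqrt hx, pdX_expSqrt hx, pdY_expSqrt, hvx,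
    lsOp_sub hux hbu hx hy, lsOp_const_mul, lsOp_pdX hu hx hy, hLux, hLu x hx]
  field_simp
  ring
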